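/- Fix 1/4 < s ≤ 1/2 and let n₁,n₂,n₃,n₄ be integers with n₄ = n₁ - n₂ + n₃. Set Ψ_s(n̄) = ⟨n₁⟩^{2s} - ⟨n₂⟩^{2s} + ⟨n₃⟩^{2s} - ⟨n₄⟩^{2s}. Then there is a constant C = C(s) such that |Ψ_s(n̄)| ≤ C ⟨n₁-n₂⟩ / min( max(⟨n₁⟩^{1-2s}, ⟨n₂⟩^{1-2s}), max(⟨n₃⟩^{1-2s}, ⟨n₄⟩^{1-2s}) ). -/

import Mathlib

/-- The Japanese bracket `⟨x⟩ = (1+x²)^{1/2}`. -/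
noncomputable def jb (x : ℝ) : ℝ := Real.sqrt (1 + x ^ 2)

/-- `Ψ_s(n₁,n₂,n₃,n₄) = ⟨n₁⟩^{2s} - ⟨n₂⟩^{2s} + ⟨n₃⟩^{2s} - ⟨n₄⟩^{2s}`. -/
noncomputable def Psi (s : ℝ) (n₁ n₂ n₃ n₄ : ℤ) : ℝ :=
  jb n₁ ^ (2 * s) - jb n₂ ^ (2 * s) + jb n₃ ^ (2 * s) - jb n₄ ^ (2 * s)

/-!
For `0 ≤ α ≤ 1` and `0 ≤ v ≤ u` one has `v = v^α v^{1-α} ≤ v^α u^{1-α}`, hence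
`(u^α - v^α) u^{1-α} ≤ u - v`: this is the bound `|⟨a⟩^α - ⟨b⟩^α| ≲ |a - b| / max(⟨a⟩^{1-α}, ⟨b⟩^{1-α})`,
since `⟨·⟩` is 1-Lipschitz. Applied to `(n₁, n₂)` and `(n₃, n₄)`, where `|n₃ - n₄| = |n₁ - n₂|`,
it gives the estimate on `Ψ_s` with `C = 2`.
-/

lemma rpow_sub_rpow_le_div {u v α : ℝ} (hv : 0 ≤ v) (hvu : v ≤ u) (hα1 : α ≤ 1) :
    u ^ α - v ^ α ≤ (u - v) / u ^ (1 - α) := by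
  rcases hvu.eq_or_lt with rfl | hvu'
  · simp
  have hu : 0 < u := hv.trans_lt hvu'
  rw [le_div_iff₀ (Real.rpow_pos_of_pos hu _)]
  have hu_split : u ^ α * u ^ (1 - α) = u := by
    rw [← Real.rpow_add hu, add_sub_cancel, Real.rpow_one]
  have hv_split : v ^ α * v ^ (1 - α) = v := by
    rw [← Real.rpow_add' hv (by simp), add_sub_cancel, Real.rpow_one]
  have : v ^ α * v ^ (1 - α) ≤ v ^ α * u ^ (1 - α) := by
    gcongr
  nlinarith

lemma abs_rpow_sub_rpow_le_div_max {u v α : ℝ} (hu : 0 ≤ u) (hv : 0 ≤ v) (hα0 : 0 ≤ α)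
    (hα1 : α ≤ 1) : |u ^ α - v ^ α| ≤ |u - v| / max (u ^ (1 - α)) (v ^ (1 - α)) := by
  wlog hvu : v ≤ u generalizing u v
  · simpa only [abs_sub_comm, max_comm] using this hv hu (le_of_not_ge hvu)
  rw [max_eq_left (Real.rpow_le_rpow hv hvu (by linarith)),
    abs_of_nonneg (sub_nonneg.2 (Real.rpow_le_rpow hv hvu hα0)),
    abs_of_nonneg (sub_nonneg.2 hvu)]
  exact rpow_sub_rpow_le_div hv hvu hα1

lemma jb_pos (x : ℝ) : 0 < jb x := Real.sqrt_pos.2 (by positivity)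

lemma abs_le_jb (x : ℝ) : |x| ≤ jb x := by
  rw [jb, ← Real.sqrt_sq_eq_abs]
  exact Real.sqrt_le_sqrt (by linarith)

lemma sq_jb (x : ℝ) : jb x ^ 2 = 1 + x ^ 2 := Real.sq_sqrt (by positivity)

lemma abs_jb_sub_jb_le (a b : ℝ) : |jb a - jb b| ≤ |a - b| := by
  have hsum : 0 < jb a + jb b := add_pos (jb_pos a) (jb_pos b)
  have hprod : |jb a - jb b| * (jb a + jb b) = |a - b| * |a + b| := by
    rw [← abs_of_pos hsum, ← abs_mul, ← abs_mul]
    congr 1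
    linear_combination sq_jb a - sq_jb b
  have hab : |a + b| ≤ jb a + jb b := (abs_add_le a b).trans (add_le_add (abs_le_jb a) (abs_le_jb b))
  refine le_of_mul_le_mul_right ?_ hsum
  rw [hprod]
  exact mul_le_mul_of_nonneg_left hab (abs_nonneg _)

lemma abs_jb_rpow_sub_jb_rpow_le {α : ℝ} (hα0 : 0 ≤ α) (hα1 : α ≤ 1) (a b : ℝ) :
    |jb a ^ α - jb b ^ α| ≤ |a - b| / max (jb a ^ (1 - α)) (jb b ^ (1 - α)) :=
  (abs_rpow_sub_rpow_le_div_max (jb_pos a).le (jb_pos b).le hα0 hα1).trans <|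
    div_le_div_of_nonneg_right (abs_jb_sub_jb_le a b)
      ((Real.rpow_pos_of_pos (jb_pos a) _).le.trans (le_max_left _ _))

/-- For `1/4 < s ≤ 1/2` and `n₄ = n₁ - n₂ + n₃`, there is `C = C(s)` such that
`|Ψ_s(n̄)| ≤ C ⟨n₁-n₂⟩ / min(max(⟨n₁⟩^{1-2s},⟨n₂⟩^{1-2s}), max(⟨n₃⟩^{1-2s},⟨n₄⟩^{1-2s}))`. -/
theorem psi_refined_bound (s : ℝ) (hs1 : 1/4 < s) (hs2 : s ≤ 1/2) :
    ∃ C > 0, ∀ n₁ n₂ n₃ n₄ : ℤ, n₄ = n₁ - n₂ + n₃ →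
      |Psi s n₁ n₂ n₃ n₄| ≤
        C * jb ((n₁ - n₂ : ℤ)) /
          min (max (jb n₁ ^ (1 - 2 * s)) (jb n₂ ^ (1 - 2 * s)))
              (max (jb n₃ ^ (1 - 2 * s)) (jb n₄ ^ (1 - 2 * s))) := by
  refine ⟨2, two_pos, fun n₁ n₂ n₃ n₄ h₄ => ?_⟩
  have pair := abs_jb_rpow_sub_jb_rpow_le (α := 2 * s) (by linarith) (by linarith)
  set M₁₂ := max (jb n₁ ^ (1 - 2 * s)) (jb n₂ ^ (1 - 2 * s))
  set M₃₄ := max (jb n₃ ^ (1 - 2 * s)) (jb n₄ ^ (1 - 2 * s))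
  have hmin : 0 < min M₁₂ M₃₄ :=
    lt_min ((Real.rpow_pos_of_pos (jb_pos _) _).trans_le (le_max_left _ _))
      ((Real.rpow_pos_of_pos (jb_pos _) _).trans_le (le_max_left _ _))
  have hdiff : |(n₁ : ℝ) - n₂| ≤ jb ((n₁ - n₂ : ℤ)) := by
    simpa only [Int.cast_sub] using abs_le_jb ((n₁ - n₂ : ℤ) : ℝ)
  have hdiff' : |(n₃ : ℝ) - n₄| = |(n₁ : ℝ) - n₂| := by
    rw [h₄, abs_sub_comm]; push_cast; ring_nf
  have bound (d M : ℝ) (hd : d ≤ jb ((n₁ - n₂ : ℤ))) (hM : min M₁₂ M₃₄ ≤ M) :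
      d / M ≤ jb ((n₁ - n₂ : ℤ)) / min M₁₂ M₃₄ :=
    div_le_div₀ (jb_pos _).le hd hmin hM
  calc |Psi s n₁ n₂ n₃ n₄|
      ≤ |jb n₁ ^ (2 * s) - jb n₂ ^ (2 * s)| + |jb n₃ ^ (2 * s) - jb n₄ ^ (2 * s)| := by
        rw [Psi, add_sub_assoc]; exact abs_add_le _ _
    _ ≤ |(n₁ : ℝ) - n₂| / M₁₂ + |(n₃ : ℝ) - n₄| / M₃₄ := add_le_add (pair _ _) (pair _ _)
    _ ≤ jb ((n₁ - n₂ : ℤ)) / min M₁₂ M₃₄ + jb ((n₁ - n₂ : ℤ)) / min M₁₂ M₃₄ :=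
        add_le_add (bound _ _ hdiff (min_le_left _ _))
          (bound _ _ (hdiff'.trans_le hdiff) (min_le_right _ _))
    _ = 2 * jb ((n₁ - n₂ : ℤ)) / min M₁₂ M₃₄ := by ring
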